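/- arXiv:1407.4936 — 7 statements merged into one kernel-verified Lean document; each statement's English description precedes it below -/
import Mathlib

section
/- For any 3-form T on a 4-dimensional real inner product space, the associated 4-form σ_T, defined by σ_T(X,Y,Z,V) = Σ_cyclic{X,Y,Z} ⟨T(X,Y,·), T(Z,V,·)⟩ (equivalently σ_T = (1/2) Σ_i (e_i ⨼ T) ∧ (e_i ⨼ T) for an orthonormal basis e_i), vanishes identically. -/
/- STATEMENT 0: For any 3-form T on a 4-dimensional real inner product space, the 4-form
σ_T(X,Y,Z,V) = Σ_cyclic{X,Y,Z} ⟨T(X,Y,·), T(Z,V,·)⟩ vanishes identically.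
We take the 4-dimensional real inner product space to be `EuclideanSpace ℝ (Fin 4)` with its
standard orthonormal basis `e i`, and ⟨T(X,Y,·), T(Z,W,·)⟩ = Σ_i T(X,Y,e_i)·T(Z,W,e_i). -/

open scoped RealInnerProductSpace

noncomputable section

/-- the standard orthonormal basis of `EuclideanSpace ℝ (Fin 4)` -/
def e (i : Fin 4) : EuclideanSpace ℝ (Fin 4) := EuclideanSpace.single i 1

/-- The 4-form `σ_T` associated to a 3-form `T`, via the cyclic sum formula
`σ_T(X,Y,Z,W) = Σ_cyclic{X,Y,Z} ⟨T(X,Y,·)♯, T(Z,W,·)♯⟩`. -/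
def sigmaT (T : AlternatingMap ℝ (EuclideanSpace ℝ (Fin 4)) ℝ (Fin 3))
    (X Y Z W : EuclideanSpace ℝ (Fin 4)) : ℝ :=
  ∑ i : Fin 4,
    (T ![X, Y, e i] * T ![Z, W, e i]
      + T ![Y, Z, e i] * T ![X, W, e i]
      + T ![Z, X, e i] * T ![Y, W, e i])

abbrev V := EuclideanSpace ℝ (Fin 4)

lemma upd0 (a x y z : V) : Function.update ![a, y, z] (0:Fin 3) x = ![x, y, z] := by
  ext i; fin_cases i <;> simp

lemma upd1 (a x y z : V) : Function.update ![x, a, z] (1:Fin 3) y = ![x, y, z] := by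
  ext i; fin_cases i <;> simp

variable (T : AlternatingMap ℝ V ℝ (Fin 3))

lemma add0 (x y b c : V) : T ![x + y, b, c] = T ![x, b, c] + T ![y, b, c] := by
  rw [← upd0 x (x+y) b c, T.map_update_add, upd0, upd0]

lemma smul0 (r : ℝ) (x b c : V) : T ![r • x, b, c] = r * T ![x, b, c] := by
  rw [← upd0 x (r • x) b c, T.map_update_smul, upd0, smul_eq_mul]

lemma add1 (x y b c : V) : T ![b, x + y, c] = T ![b, x, c] + T ![b, y, c] := by
  rw [← upd1 x b (x+y) c, T.map_update_add, upd1, upd1]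

lemma smul1 (r : ℝ) (x b c : V) : T ![b, r • x, c] = r * T ![b, x, c] := by
  rw [← upd1 x b (r • x) c, T.map_update_smul, upd1, smul_eq_mul]

lemma swap01 (x y z : V) : T ![y, x, z] = -T ![x, y, z] := by
  have h := T.map_eq_zero_of_eq ![x+y, x+y, z] (i := 0) (j := 1) (by simp) (by decide)
  rw [add0, add1, add1] at h
  have h1 : T ![x, x, z] = 0 := T.map_eq_zero_of_eq _ (by simp) (by decide : (0:Fin 3) ≠ 1)
  have h2 : T ![y, y, z] = 0 := T.map_eq_zero_of_eq _ (by simp) (by decide : (0:Fin 3) ≠ 1)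
  linarith

lemma basis_expand (X : V) : X = X 0 • e 0 + X 1 • e 1 + X 2 • e 2 + X 3 • e 3 := by
  ext i
  fin_cases i <;> simp [e, EuclideanSpace.single_apply]

lemma upd2 (a x y z : V) : Function.update ![x, y, a] (2:Fin 3) z = ![x, y, z] := by
  ext i; fin_cases i <;> simp

lemma add2 (x y b c : V) : T ![b, c, x + y] = T ![b, c, x] + T ![b, c, y] := by
  rw [← upd2 x b c (x+y), T.map_update_add, upd2, upd2]

lemma swap12 (x y z : V) : T ![x, z, y] = -T ![x, y, z] := by
  have h := T.map_eq_zero_of_eq ![x, y+z, y+z] (i := 1) (j := 2) (by simp) (by decide)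
  rw [add1, add2, add2] at h
  have h1 : T ![x, y, y] = 0 := T.map_eq_zero_of_eq _ (i := 1) (j := 2) (by simp) (by decide)
  have h2 : T ![x, z, z] = 0 := T.map_eq_zero_of_eq _ (i := 1) (j := 2) (by simp) (by decide)
  linarith

lemma swap02 (x y z : V) : T ![z, y, x] = -T ![x, y, z] := by
  have h := T.map_eq_zero_of_eq ![x+z, y, x+z] (i := 0) (j := 2) (by simp) (by decide)
  rw [add0, add2, add2] at h
  have h1 : T ![x, y, x] = 0 := T.map_eq_zero_of_eq _ (i := 0) (j := 2) (by simp) (by decide)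
  have h2 : T ![z, y, z] = 0 := T.map_eq_zero_of_eq _ (i := 0) (j := 2) (by simp) (by decide)
  linarith

lemma perm_yzx (x y z : V) : T ![y, z, x] = T ![x, y, z] := by
  rw [swap02, swap12]; ring

lemma perm_zxy (x y z : V) : T ![z, x, y] = T ![x, y, z] := by
  rw [swap01, swap12]; ring

lemma Tb000 : T ![e 0, e 0, e 0] = 0 :=
  T.map_eq_zero_of_eq _ (i := 0) (j := 1) (by simp) (by decide)

lemma Tb001 : T ![e 0, e 0, e 1] = 0 :=
  T.map_eq_zero_of_eq _ (i := 0) (j := 1) (by simp) (by decide)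

lemma Tb002 : T ![e 0, e 0, e 2] = 0 :=
  T.map_eq_zero_of_eq _ (i := 0) (j := 1) (by simp) (by decide)

lemma Tb003 : T ![e 0, e 0, e 3] = 0 :=
  T.map_eq_zero_of_eq _ (i := 0) (j := 1) (by simp) (by decide)

lemma Tb010 : T ![e 0, e 1, e 0] = 0 :=
  T.map_eq_zero_of_eq _ (i := 0) (j := 2) (by simp) (by decide)

lemma Tb011 : T ![e 0, e 1, e 1] = 0 :=
  T.map_eq_zero_of_eq _ (i := 1) (j := 2) (by simp) (by decide)

lemma Tb020 : T ![e 0, e 2, e 0] = 0 :=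
  T.map_eq_zero_of_eq _ (i := 0) (j := 2) (by simp) (by decide)

lemma Tb021 : T ![e 0, e 2, e 1] = -(T ![e 0, e 1, e 2]) := by rw [swap12]

lemma Tb022 : T ![e 0, e 2, e 2] = 0 :=
  T.map_eq_zero_of_eq _ (i := 1) (j := 2) (by simp) (by decide)

lemma Tb030 : T ![e 0, e 3, e 0] = 0 :=
  T.map_eq_zero_of_eq _ (i := 0) (j := 2) (by simp) (by decide)

lemma Tb031 : T ![e 0, e 3, e 1] = -(T ![e 0, e 1, e 3]) := by rw [swap12]

lemma Tb032 : T ![e 0, e 3, e 2] = -(T ![e 0, e 2, e 3]) := by rw [swap12]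

lemma Tb033 : T ![e 0, e 3, e 3] = 0 :=
  T.map_eq_zero_of_eq _ (i := 1) (j := 2) (by simp) (by decide)

lemma Tb100 : T ![e 1, e 0, e 0] = 0 :=
  T.map_eq_zero_of_eq _ (i := 1) (j := 2) (by simp) (by decide)

lemma Tb101 : T ![e 1, e 0, e 1] = 0 :=
  T.map_eq_zero_of_eq _ (i := 0) (j := 2) (by simp) (by decide)

lemma Tb102 : T ![e 1, e 0, e 2] = -(T ![e 0, e 1, e 2]) := by rw [swap01]

lemma Tb103 : T ![e 1, e 0, e 3] = -(T ![e 0, e 1, e 3]) := by rw [swap01]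

lemma Tb110 : T ![e 1, e 1, e 0] = 0 :=
  T.map_eq_zero_of_eq _ (i := 0) (j := 1) (by simp) (by decide)

lemma Tb111 : T ![e 1, e 1, e 1] = 0 :=
  T.map_eq_zero_of_eq _ (i := 0) (j := 1) (by simp) (by decide)

lemma Tb112 : T ![e 1, e 1, e 2] = 0 :=
  T.map_eq_zero_of_eq _ (i := 0) (j := 1) (by simp) (by decide)

lemma Tb113 : T ![e 1, e 1, e 3] = 0 :=
  T.map_eq_zero_of_eq _ (i := 0) (j := 1) (by simp) (by decide)

lemma Tb120 : T ![e 1, e 2, e 0] = T ![e 0, e 1, e 2] := by rw [perm_yzx]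

lemma Tb121 : T ![e 1, e 2, e 1] = 0 :=
  T.map_eq_zero_of_eq _ (i := 0) (j := 2) (by simp) (by decide)

lemma Tb122 : T ![e 1, e 2, e 2] = 0 :=
  T.map_eq_zero_of_eq _ (i := 1) (j := 2) (by simp) (by decide)

lemma Tb130 : T ![e 1, e 3, e 0] = T ![e 0, e 1, e 3] := by rw [perm_yzx]

lemma Tb131 : T ![e 1, e 3, e 1] = 0 :=
  T.map_eq_zero_of_eq _ (i := 0) (j := 2) (by simp) (by decide)

lemma Tb132 : T ![e 1, e 3, e 2] = -(T ![e 1, e 2, e 3]) := by rw [swap12]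

lemma Tb133 : T ![e 1, e 3, e 3] = 0 :=
  T.map_eq_zero_of_eq _ (i := 1) (j := 2) (by simp) (by decide)

lemma Tb200 : T ![e 2, e 0, e 0] = 0 :=
  T.map_eq_zero_of_eq _ (i := 1) (j := 2) (by simp) (by decide)

lemma Tb201 : T ![e 2, e 0, e 1] = T ![e 0, e 1, e 2] := by rw [perm_zxy]

lemma Tb202 : T ![e 2, e 0, e 2] = 0 :=
  T.map_eq_zero_of_eq _ (i := 0) (j := 2) (by simp) (by decide)

lemma Tb203 : T ![e 2, e 0, e 3] = -(T ![e 0, e 2, e 3]) := by rw [swap01]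

lemma Tb210 : T ![e 2, e 1, e 0] = -(T ![e 0, e 1, e 2]) := by rw [swap02]

lemma Tb211 : T ![e 2, e 1, e 1] = 0 :=
  T.map_eq_zero_of_eq _ (i := 1) (j := 2) (by simp) (by decide)

lemma Tb212 : T ![e 2, e 1, e 2] = 0 :=
  T.map_eq_zero_of_eq _ (i := 0) (j := 2) (by simp) (by decide)

lemma Tb213 : T ![e 2, e 1, e 3] = -(T ![e 1, e 2, e 3]) := by rw [swap01]

lemma Tb220 : T ![e 2, e 2, e 0] = 0 :=
  T.map_eq_zero_of_eq _ (i := 0) (j := 1) (by simp) (by decide)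

lemma Tb221 : T ![e 2, e 2, e 1] = 0 :=
  T.map_eq_zero_of_eq _ (i := 0) (j := 1) (by simp) (by decide)

lemma Tb222 : T ![e 2, e 2, e 2] = 0 :=
  T.map_eq_zero_of_eq _ (i := 0) (j := 1) (by simp) (by decide)

lemma Tb223 : T ![e 2, e 2, e 3] = 0 :=
  T.map_eq_zero_of_eq _ (i := 0) (j := 1) (by simp) (by decide)

lemma Tb230 : T ![e 2, e 3, e 0] = T ![e 0, e 2, e 3] := by rw [perm_yzx]

lemma Tb231 : T ![e 2, e 3, e 1] = T ![e 1, e 2, e 3] := by rw [perm_yzx]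

lemma Tb232 : T ![e 2, e 3, e 2] = 0 :=
  T.map_eq_zero_of_eq _ (i := 0) (j := 2) (by simp) (by decide)

lemma Tb233 : T ![e 2, e 3, e 3] = 0 :=
  T.map_eq_zero_of_eq _ (i := 1) (j := 2) (by simp) (by decide)

lemma Tb300 : T ![e 3, e 0, e 0] = 0 :=
  T.map_eq_zero_of_eq _ (i := 1) (j := 2) (by simp) (by decide)

lemma Tb301 : T ![e 3, e 0, e 1] = T ![e 0, e 1, e 3] := by rw [perm_zxy]

lemma Tb302 : T ![e 3, e 0, e 2] = T ![e 0, e 2, e 3] := by rw [perm_zxy]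

lemma Tb303 : T ![e 3, e 0, e 3] = 0 :=
  T.map_eq_zero_of_eq _ (i := 0) (j := 2) (by simp) (by decide)

lemma Tb310 : T ![e 3, e 1, e 0] = -(T ![e 0, e 1, e 3]) := by rw [swap02]

lemma Tb311 : T ![e 3, e 1, e 1] = 0 :=
  T.map_eq_zero_of_eq _ (i := 1) (j := 2) (by simp) (by decide)

lemma Tb312 : T ![e 3, e 1, e 2] = T ![e 1, e 2, e 3] := by rw [perm_zxy]

lemma Tb313 : T ![e 3, e 1, e 3] = 0 :=
  T.map_eq_zero_of_eq _ (i := 0) (j := 2) (by simp) (by decide)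

lemma Tb320 : T ![e 3, e 2, e 0] = -(T ![e 0, e 2, e 3]) := by rw [swap02]

lemma Tb321 : T ![e 3, e 2, e 1] = -(T ![e 1, e 2, e 3]) := by rw [swap02]

lemma Tb322 : T ![e 3, e 2, e 2] = 0 :=
  T.map_eq_zero_of_eq _ (i := 1) (j := 2) (by simp) (by decide)

lemma Tb323 : T ![e 3, e 2, e 3] = 0 :=
  T.map_eq_zero_of_eq _ (i := 0) (j := 2) (by simp) (by decide)

lemma Tb330 : T ![e 3, e 3, e 0] = 0 :=
  T.map_eq_zero_of_eq _ (i := 0) (j := 1) (by simp) (by decide)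

lemma Tb331 : T ![e 3, e 3, e 1] = 0 :=
  T.map_eq_zero_of_eq _ (i := 0) (j := 1) (by simp) (by decide)

lemma Tb332 : T ![e 3, e 3, e 2] = 0 :=
  T.map_eq_zero_of_eq _ (i := 0) (j := 1) (by simp) (by decide)

lemma Tb333 : T ![e 3, e 3, e 3] = 0 :=
  T.map_eq_zero_of_eq _ (i := 0) (j := 1) (by simp) (by decide)

theorem final (X Y Z W : V) :
    (∑ i : Fin 4,
      (T ![X, Y, e i] * T ![Z, W, e i]
        + T ![Y, Z, e i] * T ![X, W, e i]
        + T ![Z, X, e i] * T ![Y, W, e i])) = 0 := by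
  obtain ⟨x0, x1, x2, x3, rfl⟩ : ∃ a b c d, X = a • e 0 + b • e 1 + c • e 2 + d • e 3 :=
    ⟨X 0, X 1, X 2, X 3, basis_expand X⟩
  obtain ⟨y0, y1, y2, y3, rfl⟩ : ∃ a b c d, Y = a • e 0 + b • e 1 + c • e 2 + d • e 3 :=
    ⟨Y 0, Y 1, Y 2, Y 3, basis_expand Y⟩
  obtain ⟨z0, z1, z2, z3, rfl⟩ : ∃ a b c d, Z = a • e 0 + b • e 1 + c • e 2 + d • e 3 :=
    ⟨Z 0, Z 1, Z 2, Z 3, basis_expand Z⟩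
  obtain ⟨w0, w1, w2, w3, rfl⟩ : ∃ a b c d, W = a • e 0 + b • e 1 + c • e 2 + d • e 3 :=
    ⟨W 0, W 1, W 2, W 3, basis_expand W⟩
  simp only [Fin.sum_univ_four, add0, add1, smul0, smul1]
  simp only [Tb000, Tb001, Tb002, Tb003, Tb010, Tb011, Tb020, Tb021, Tb022, Tb030, Tb031, Tb032, Tb033, Tb100, Tb101, Tb102, Tb103, Tb110, Tb111, Tb112, Tb113, Tb120, Tb121, Tb122, Tb130, Tb131, Tb132, Tb133, Tb200, Tb201, Tb202, Tb203, Tb210, Tb211, Tb212, Tb213, Tb220, Tb221, Tb222, Tb223, Tb230, Tb231, Tb232, Tb233, Tb300, Tb301, Tb302, Tb303, Tb310, Tb311, Tb312, Tb313, Tb320, Tb321, Tb322, Tb323, Tb330, Tb331, Tb332, Tb333]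
  ring


theorem sigmaT_eq_zero_dim_four
    (T : AlternatingMap ℝ (EuclideanSpace ℝ (Fin 4)) ℝ (Fin 3))
    (X Y Z W : EuclideanSpace ℝ (Fin 4)) :
    sigmaT T X Y Z W = 0 := by
  rw [sigmaT]; exact final T X Y Z W

end
end

section
/- For any 3-form T on a real inner product space and any vector X, the action of the 2-form X ⨼ T, viewed as an element of so(n) acting as a derivation on forms, satisfies ((X ⨼ T)·T)(Y₁,Y₂,Y₃) = σ_T(Y₁,Y₂,Y₃,X). -/
/- STATEMENT 1: For any 3-form T on a real inner product space and any vector X, the action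
of the 2-form X ⨼ T (viewed as the skew-symmetric endomorphism A with ⟨A U, W⟩ = T(X,U,W),
acting as a derivation on forms) satisfies ((X ⨼ T)·T)(Y₁,Y₂,Y₃) = σ_T(Y₁,Y₂,Y₃,X).

Here `Tv X Y` denotes the vector T(X,Y) dual to the 1-form T(X,Y,·), so that
A_{X ⨼ T} U = Tv X U, and
σ_T(Y₁,Y₂,Y₃,X) = Σ_cyclic{Y₁,Y₂,Y₃} ⟨T(Y₁,Y₂), T(Y₃,X)⟩. -/

open scoped RealInnerProductSpace


lemma swap01_s1 {E : Type*} [NormedAddCommGroup E] [InnerProductSpace ℝ E]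
    (T : AlternatingMap ℝ E ℝ (Fin 3)) (a b c : E) :
    T ![a, b, c] = -T ![b, a, c] := by
  have h := T.map_swap ![b, a, c] (show (0:Fin 3) ≠ 1 by decide)
  have : (![b, a, c] ∘ Equiv.swap (0:Fin 3) 1) = ![a, b, c] := by
    funext i; fin_cases i <;> simp [Equiv.swap_apply_def]
  rw [this] at h; linarith [h]

lemma swap12_s1 {E : Type*} [NormedAddCommGroup E] [InnerProductSpace ℝ E]
    (T : AlternatingMap ℝ E ℝ (Fin 3)) (a b c : E) :
    T ![a, b, c] = -T ![a, c, b] := by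
  have h := T.map_swap ![a, c, b] (show (1:Fin 3) ≠ 2 by decide)
  have : (![a, c, b] ∘ Equiv.swap (1:Fin 3) 2) = ![a, b, c] := by
    funext i; fin_cases i <;> simp [Equiv.swap_apply_def]
  rw [this] at h; linarith [h]

theorem contraction_action_on_torsion
    {E : Type*} [NormedAddCommGroup E] [InnerProductSpace ℝ E]
    (T : AlternatingMap ℝ E ℝ (Fin 3)) (Tv : E → E → E)
    (hTv : ∀ X Y Z : E, ⟪Tv X Y, Z⟫ = T ![X, Y, Z])
    (X Y₁ Y₂ Y₃ : E) :
    -(T ![Tv X Y₁, Y₂, Y₃] + T ![Y₁, Tv X Y₂, Y₃] + T ![Y₁, Y₂, Tv X Y₃])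
      = ⟪Tv Y₁ Y₂, Tv Y₃ X⟫ + ⟪Tv Y₂ Y₃, Tv Y₁ X⟫ + ⟪Tv Y₃ Y₁, Tv Y₂ X⟫ := by
  have cyc : ∀ a b c : E, T ![a, b, c] = T ![b, c, a] := by
    intro a b c
    rw [swap01_s1, swap12_s1]; ring_nf
  have key : ∀ a b c d : E, T ![a, b, Tv c d] = -⟪Tv a b, Tv d c⟫ := by
    intro a b c d
    rw [← hTv]
    have : ⟪Tv c d, Tv a b⟫ = -⟪Tv d c, Tv a b⟫ := by
      rw [hTv, hTv, swap01_s1]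
    rw [real_inner_comm, this, real_inner_comm]
  have t1 : T ![Tv X Y₁, Y₂, Y₃] = -⟪Tv Y₂ Y₃, Tv Y₁ X⟫ := by
    rw [cyc, key]
  have t2 : T ![Y₁, Tv X Y₂, Y₃] = -⟪Tv Y₃ Y₁, Tv Y₂ X⟫ := by
    rw [cyc, cyc, key]
  have t3 : T ![Y₁, Y₂, Tv X Y₃] = -⟪Tv Y₁ Y₂, Tv Y₃ X⟫ := by
    rw [key]
  rw [t1, t2, t3]; ring
end

section
/- Let T be a 3-form on a real inner product space V such that σ_T = 0. Then the bracket [X,Y] := T(X,Y) (the vector dual to T(X,Y,·)) makes V into a Lie algebra, i.e., it satisfies the Jacobi identity. -/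
/- STATEMENT 2: Let T be a 3-form on a real inner product space V such that σ_T = 0.
Then the bracket [X,Y] := T(X,Y) (the vector dual to T(X,Y,·)) satisfies the Jacobi identity
(and hence makes V into a Lie algebra).

`Tv X Y` is the vector T(X,Y), characterized by ⟪Tv X Y, Z⟫ = T(X,Y,Z), and
σ_T(X,Y,Z,W) = Σ_cyclic{X,Y,Z} ⟨T(X,Y), T(Z,W)⟩. -/

open scoped RealInnerProductSpace

theorem jacobi_of_sigmaT_eq_zero
    {E : Type*} [NormedAddCommGroup E] [InnerProductSpace ℝ E]
    (T : AlternatingMap ℝ E ℝ (Fin 3)) (Tv : E → E → E)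
    (hTv : ∀ X Y Z : E, ⟪Tv X Y, Z⟫ = T ![X, Y, Z])
    (hsigma : ∀ X Y Z W : E,
      ⟪Tv X Y, Tv Z W⟫ + ⟪Tv Y Z, Tv X W⟫ + ⟪Tv Z X, Tv Y W⟫ = 0)
    (X Y Z : E) :
    Tv (Tv X Y) Z + Tv (Tv Y Z) X + Tv (Tv Z X) Y = 0 := by
  have hc : ∀ a b c : E, T ![a, b, c] = T ![b, c, a] := by
    intro a b c
    have h1 : T ![a, b, c] = -T ![b, a, c] := by
      have := T.map_swap ![a, b, c] (i := 0) (j := 1) (by decide)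
      have he : ![a, b, c] ∘ ⇑(Equiv.swap (0:Fin 3) 1) = ![b, a, c] := by
        ext i; fin_cases i <;> simp [Equiv.swap_apply_def]
      rw [he] at this
      linarith
    have h2 : T ![b, a, c] = -T ![b, c, a] := by
      have := T.map_swap ![b, a, c] (i := 1) (j := 2) (by decide)
      have he : ![b, a, c] ∘ ⇑(Equiv.swap (1:Fin 3) 2) = ![b, c, a] := by
        ext i; fin_cases i <;> simp [Equiv.swap_apply_def]
      rw [he] at this
      linarith
    rw [h1, h2]; ring
  have key : ∀ W : E, ⟪Tv (Tv X Y) Z + Tv (Tv Y Z) X + Tv (Tv Z X) Y, W⟫ = 0 := by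
    intro W
    have e1 : ⟪Tv (Tv X Y) Z, W⟫ = ⟪Tv X Y, Tv Z W⟫ := by
      rw [hTv, hc, ← hTv, real_inner_comm]
    have e2 : ⟪Tv (Tv Y Z) X, W⟫ = ⟪Tv Y Z, Tv X W⟫ := by
      rw [hTv, hc, ← hTv, real_inner_comm]
    have e3 : ⟪Tv (Tv Z X) Y, W⟫ = ⟪Tv Z X, Tv Y W⟫ := by
      rw [hTv, hc, ← hTv, real_inner_comm]
    rw [inner_add_left, inner_add_left, e1, e2, e3]
    exact hsigma X Y Z W
  have := key (Tv (Tv X Y) Z + Tv (Tv Y Z) X + Tv (Tv Z X) Y)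
  rwa [inner_self_eq_zero] at this
end

section
/- Let h ⊆ so(V) be a Lie subalgebra acting on a finite-dimensional real inner product space V, T ∈ Λ³V an h-invariant 3-form, and R: Λ²V → h an h-equivariant linear map. Then the bracket on g := h ⊕ V defined by [A+X, B+Y] := ([A,B]_h − R(X∧Y)) + (AY − BX − T(X,Y)) satisfies the Jacobi identity if and only if (1) Σ_cyclic{X,Y,Z} R(X,Y,Z,V) = σ_T(X,Y,Z,V) for all X,Y,Z,V ∈ V, and (2) Σ_cyclic{X,Y,Z} R(T(X,Y) ∧ Z) = 0 for all X,Y,Z ∈ V. -/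
/- STATEMENT 4 (Nomizu construction): Let h ⊆ so(V) be a Lie subalgebra acting on a
finite-dimensional real inner product space V, T ∈ Λ³V an h-invariant 3-form, and
R : Λ²V → h an h-equivariant linear map. Then the bracket on g := h ⊕ V defined by
  [A+X, B+Y] := ([A,B]_h − R(X∧Y)) + (AY − BX − T(X,Y))
satisfies the Jacobi identity if and only if
 (1) Σ_cyclic{X,Y,Z} R(X,Y,Z,W) = σ_T(X,Y,Z,W)  (first Bianchi condition), and
 (2) Σ_cyclic{X,Y,Z} R(T(X,Y) ∧ Z) = 0           (second Bianchi condition).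

R(X∧Y) is encoded as a bilinear map `R : V →ₗ V →ₗ End(V)` with `R X X = 0`, taking values
in h; `Tv X Y` is the vector dual to T(X,Y,·); R(X,Y,Z,W) := ⟨R(X∧Y)Z, W⟩;
σ_T(X,Y,Z,W) = Σ_cyclic{X,Y,Z} ⟨T(X,Y), T(Z,W)⟩. -/

open scoped RealInnerProductSpace

attribute [local instance 100] LieRing.ofAssociativeRing

/-- the Nomizu bracket on `End(V) × V`; its restriction to `h × V` is the bracket
`[A+X, B+Y] = ([A,B] − R(X∧Y)) + (AY − BX − T(X,Y))` of the Nomizu construction. -/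
def nomizuBracket {E : Type*} [NormedAddCommGroup E] [InnerProductSpace ℝ E]
    (Tv : E → E → E) (R : E →ₗ[ℝ] E →ₗ[ℝ] Module.End ℝ E)
    (p q : Module.End ℝ E × E) : Module.End ℝ E × E :=
  (⁅p.1, q.1⁆ - R p.2 q.2, p.1 q.2 - q.1 p.2 - Tv p.2 q.2)

/-! The Jacobiator of `(A, X), (B, Y), (C, Z)` with `A, B, C ∈ h` does not depend on `A, B, C`:
the `h`-terms cancel by the Jacobi identity of `h`, the equivariance of `R` and the invariance
of `T`. What is left is `(Σ R(T(X,Y) ∧ Z), Σ T(T(X,Y), Z) − Σ R(X ∧ Y) Z)`. Its first component is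
the second Bianchi expression, and pairing the second with `W` gives the first Bianchi identity,
because `⟨T(T(X,Y), Z), W⟩ = ⟨T(X,Y), T(Z,W)⟩` by cyclicity of `T`. -/

namespace AlternatingMap

variable {R M N : Type*} [CommRing R] [AddCommGroup M] [Module R M] [AddCommGroup N] [Module R N]
  (T : M [⋀^Fin 3]→ₗ[R] N)

theorem map_fin3_swap₀₁ (a b c : M) : T ![a, b, c] = -T ![b, a, c] := by
  have e : ![b, a, c] ∘ Equiv.swap (0 : Fin 3) 1 = ![a, b, c] := by
    ext i; fin_cases i <;> rfl
  rw [← T.map_swap ![b, a, c] (by decide : (0 : Fin 3) ≠ 1), e]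

theorem map_fin3_swap₁₂ (a b c : M) : T ![a, b, c] = -T ![a, c, b] := by
  have e : ![a, c, b] ∘ Equiv.swap (1 : Fin 3) 2 = ![a, b, c] := by
    ext i; fin_cases i <;> rfl
  rw [← T.map_swap ![a, c, b] (by decide : (1 : Fin 3) ≠ 2), e]

theorem map_fin3_cycle (a b c : M) : T ![a, b, c] = T ![b, c, a] := by
  rw [map_fin3_swap₀₁, map_fin3_swap₁₂, neg_neg]

end AlternatingMap

section Torsion

variable {E : Type*} [NormedAddCommGroup E] [InnerProductSpace ℝ E]
  {T : E [⋀^Fin 3]→ₗ[ℝ] ℝ} {Tv : E → E → E}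

theorem tv_sub_left (hTv : ∀ X Y Z : E, ⟪Tv X Y, Z⟫ = T ![X, Y, Z]) (a b Z : E) :
    Tv (a - b) Z = Tv a Z - Tv b Z :=
  ext_inner_right ℝ fun W => by
    rw [inner_sub_left, hTv, hTv, hTv, sub_eq_add_neg a, T.map_vecCons_add,
      ← neg_one_smul ℝ b, T.map_vecCons_smul, neg_one_smul, sub_eq_add_neg]

theorem inner_tv_tv_left (hTv : ∀ X Y Z : E, ⟪Tv X Y, Z⟫ = T ![X, Y, Z]) (X Y Z W : E) :
    ⟪Tv (Tv X Y) Z, W⟫ = ⟪Tv X Y, Tv Z W⟫ := by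
  rw [hTv, T.map_fin3_cycle, ← hTv, real_inner_comm]

theorem apply_tv_of_invariant (hTv : ∀ X Y Z : E, ⟪Tv X Y, Z⟫ = T ![X, Y, Z])
    {C : Module.End ℝ E} (hskew : ∀ X Y : E, ⟪C X, Y⟫ = -⟪X, C Y⟫)
    (hinv : ∀ X Y Z : E, T ![C X, Y, Z] + T ![X, C Y, Z] + T ![X, Y, C Z] = 0) (X Y : E) :
    C (Tv X Y) = Tv (C X) Y - Tv (C Y) X :=
  ext_inner_right ℝ fun W => by
    have := hinv X Y W
    rw [inner_sub_left, hskew, hTv, hTv, hTv, T.map_fin3_swap₀₁ (C Y)]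
    linarith

theorem cyclic_tv_tv_eq_iff (hTv : ∀ X Y Z : E, ⟪Tv X Y, Z⟫ = T ![X, Y, Z]) (X Y Z u : E) :
    Tv (Tv X Y) Z + Tv (Tv Y Z) X + Tv (Tv Z X) Y = u ↔
      ∀ W : E, ⟪u, W⟫ = ⟪Tv X Y, Tv Z W⟫ + ⟪Tv Y Z, Tv X W⟫ + ⟪Tv Z X, Tv Y W⟫ := by
  simp only [← inner_tv_tv_left hTv, ← inner_add_left]
  exact ⟨fun h W => h ▸ rfl, fun h => (ext_inner_right ℝ h).symm⟩

end Torsion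

section Jacobiator

variable {E : Type*} [NormedAddCommGroup E] [InnerProductSpace ℝ E]
  {Tv : E → E → E} {R : E →ₗ[ℝ] E →ₗ[ℝ] Module.End ℝ E}

def nomizuJacobiator (Tv : E → E → E) (R : E →ₗ[ℝ] E →ₗ[ℝ] Module.End ℝ E)
    (p q r : Module.End ℝ E × E) : Module.End ℝ E × E :=
  nomizuBracket Tv R (nomizuBracket Tv R p q) r + nomizuBracket Tv R (nomizuBracket Tv R q r) p
    + nomizuBracket Tv R (nomizuBracket Tv R r p) q

theorem curvature_apply_left_of_equivariant (hRalt : R.IsAlt) {A : Module.End ℝ E}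
    (hA : ∀ X Y : E, R (A X) Y + R X (A Y) = ⁅A, R X Y⁆) (X Y : E) :
    R (A X) Y = R (A Y) X - ⁅R X Y, A⁆ := by
  rw [← lie_skew, ← hA, ← hRalt.neg X (A Y)]
  abel

theorem nomizuJacobiator_fst (hRalt : R.IsAlt) {A B C : Module.End ℝ E}
    (hA : ∀ X Y : E, R (A X) Y + R X (A Y) = ⁅A, R X Y⁆)
    (hB : ∀ X Y : E, R (B X) Y + R X (B Y) = ⁅B, R X Y⁆)
    (hC : ∀ X Y : E, R (C X) Y + R X (C Y) = ⁅C, R X Y⁆) (X Y Z : E) :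
    (nomizuJacobiator Tv R (A, X) (B, Y) (C, Z)).1
      = R (Tv X Y) Z + R (Tv Y Z) X + R (Tv Z X) Y := by
  have hJacobi : ⁅⁅A, B⁆, C⁆ + ⁅⁅B, C⁆, A⁆ + ⁅⁅C, A⁆, B⁆ = 0 := by
    rw [← lie_skew ⁅A, B⁆, ← lie_skew ⁅B, C⁆, ← lie_skew ⁅C, A⁆, ← neg_add, ← neg_add, lie_jacobi,
      neg_zero]
  simp only [nomizuJacobiator, nomizuBracket, Prod.fst_add, sub_lie, map_sub, LinearMap.sub_apply]
  rw [curvature_apply_left_of_equivariant hRalt hA Y Z,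
    curvature_apply_left_of_equivariant hRalt hB Z X,
    curvature_apply_left_of_equivariant hRalt hC X Y, ← sub_eq_zero, ← hJacobi]
  abel

theorem nomizuJacobiator_snd (hTv_sub : ∀ a b Z : E, Tv (a - b) Z = Tv a Z - Tv b Z)
    {A B C : Module.End ℝ E}
    (hA : ∀ X Y : E, A (Tv X Y) = Tv (A X) Y - Tv (A Y) X)
    (hB : ∀ X Y : E, B (Tv X Y) = Tv (B X) Y - Tv (B Y) X)
    (hC : ∀ X Y : E, C (Tv X Y) = Tv (C X) Y - Tv (C Y) X) (X Y Z : E) :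
    (nomizuJacobiator Tv R (A, X) (B, Y) (C, Z)).2
      = Tv (Tv X Y) Z + Tv (Tv Y Z) X + Tv (Tv Z X) Y - (R X Y Z + R Y Z X + R Z X Y) := by
  simp only [nomizuJacobiator, nomizuBracket, Prod.snd_add, Ring.lie_def, LinearMap.sub_apply,
    Module.End.mul_apply, map_sub, hTv_sub, hA, hB, hC]
  abel

end Jacobiator

theorem nomizu_jacobi_iff_bianchi_general
    {E : Type*} [NormedAddCommGroup E] [InnerProductSpace ℝ E]
    (h : LieSubalgebra ℝ (Module.End ℝ E))
    (hskew : ∀ A ∈ h, ∀ X Y : E, ⟪A X, Y⟫ = -⟪X, A Y⟫)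
    (T : AlternatingMap ℝ E ℝ (Fin 3)) (Tv : E → E → E)
    (hTv : ∀ X Y Z : E, ⟪Tv X Y, Z⟫ = T ![X, Y, Z])
    (hTinv : ∀ A ∈ h, ∀ X Y Z : E,
      T ![A X, Y, Z] + T ![X, A Y, Z] + T ![X, Y, A Z] = 0)
    (R : E →ₗ[ℝ] E →ₗ[ℝ] Module.End ℝ E)
    (hRalt : ∀ X : E, R X X = 0)
    (hReq : ∀ A ∈ h, ∀ X Y : E, R (A X) Y + R X (A Y) = ⁅A, R X Y⁆) :
    (∀ p q r : Module.End ℝ E × E, p.1 ∈ h → q.1 ∈ h → r.1 ∈ h →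
        nomizuBracket Tv R (nomizuBracket Tv R p q) r
          + nomizuBracket Tv R (nomizuBracket Tv R q r) p
          + nomizuBracket Tv R (nomizuBracket Tv R r p) q = 0)
      ↔ ((∀ X Y Z W : E,
            ⟪(R X Y) Z, W⟫ + ⟪(R Y Z) X, W⟫ + ⟪(R Z X) Y, W⟫
              = ⟪Tv X Y, Tv Z W⟫ + ⟪Tv Y Z, Tv X W⟫ + ⟪Tv Z X, Tv Y W⟫)
          ∧ (∀ X Y Z : E, R (Tv X Y) Z + R (Tv Y Z) X + R (Tv Z X) Y = 0)) := by
  have hTv_inv : ∀ A ∈ h, ∀ X Y : E, A (Tv X Y) = Tv (A X) Y - Tv (A Y) X := fun A hA =>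
    apply_tv_of_invariant hTv (hskew A hA) (hTinv A hA)
  have jacobiator_eq : ∀ A ∈ h, ∀ B ∈ h, ∀ C ∈ h, ∀ X Y Z : E,
      nomizuJacobiator Tv R (A, X) (B, Y) (C, Z)
        = (R (Tv X Y) Z + R (Tv Y Z) X + R (Tv Z X) Y,
          Tv (Tv X Y) Z + Tv (Tv Y Z) X + Tv (Tv Z X) Y - (R X Y Z + R Y Z X + R Z X Y)) :=
    fun A hA B hB C hC X Y Z => Prod.ext
      (nomizuJacobiator_fst hRalt (hReq A hA) (hReq B hB) (hReq C hC) X Y Z)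
      (nomizuJacobiator_snd (tv_sub_left hTv) (hTv_inv A hA) (hTv_inv B hB) (hTv_inv C hC) X Y Z)
  simp only [← inner_add_left, ← cyclic_tv_tv_eq_iff hTv]
  constructor
  · intro hJ
    have hzero X Y Z := (jacobiator_eq 0 h.zero_mem 0 h.zero_mem 0 h.zero_mem X Y Z).symm.trans
      (hJ (0, X) (0, Y) (0, Z) h.zero_mem h.zero_mem h.zero_mem)
    exact ⟨fun X Y Z => sub_eq_zero.mp (congrArg Prod.snd (hzero X Y Z)),
      fun X Y Z => congrArg Prod.fst (hzero X Y Z)⟩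
  · rintro ⟨hfirst, hsecond⟩ ⟨A, X⟩ ⟨B, Y⟩ ⟨C, Z⟩ hA hB hC
    change nomizuJacobiator Tv R (A, X) (B, Y) (C, Z) = 0
    rw [jacobiator_eq A hA B hB C hC, hsecond, hfirst, sub_self, Prod.mk_zero_zero]

theorem nomizu_jacobi_iff_bianchi
    {E : Type*} [NormedAddCommGroup E] [InnerProductSpace ℝ E] [FiniteDimensional ℝ E]
    (h : LieSubalgebra ℝ (Module.End ℝ E))
    (hskew : ∀ A ∈ h, ∀ X Y : E, ⟪A X, Y⟫ = -⟪X, A Y⟫)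
    (T : AlternatingMap ℝ E ℝ (Fin 3)) (Tv : E → E → E)
    (hTv : ∀ X Y Z : E, ⟪Tv X Y, Z⟫ = T ![X, Y, Z])
    (hTinv : ∀ A ∈ h, ∀ X Y Z : E,
      T ![A X, Y, Z] + T ![X, A Y, Z] + T ![X, Y, A Z] = 0)
    (R : E →ₗ[ℝ] E →ₗ[ℝ] Module.End ℝ E)
    (hRalt : ∀ X : E, R X X = 0)
    (hRmem : ∀ X Y : E, R X Y ∈ h)
    (hReq : ∀ A ∈ h, ∀ X Y : E, R (A X) Y + R X (A Y) = ⁅A, R X Y⁆) :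
    (∀ p q r : Module.End ℝ E × E, p.1 ∈ h → q.1 ∈ h → r.1 ∈ h →
        nomizuBracket Tv R (nomizuBracket Tv R p q) r
          + nomizuBracket Tv R (nomizuBracket Tv R q r) p
          + nomizuBracket Tv R (nomizuBracket Tv R r p) q = 0)
      ↔ ((∀ X Y Z W : E,
            ⟪(R X Y) Z, W⟫ + ⟪(R Y Z) X, W⟫ + ⟪(R Z X) Y, W⟫
              = ⟪Tv X Y, Tv Z W⟫ + ⟪Tv Y Z, Tv X W⟫ + ⟪Tv Z X, Tv Y W⟫)
          ∧ (∀ X Y Z : E, R (Tv X Y) Z + R (Tv Y Z) X + R (Tv Z X) Y = 0)) :=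
  nomizu_jacobi_iff_bianchi_general h hskew T Tv hTv hTinv R hRalt hReq
end

section
/- Let h ⊆ so(V) be a Lie subalgebra, T ∈ Λ³V an h-invariant 3-form, and R: Λ²V → h ⊆ Λ²V a symmetric linear map (with respect to the induced inner product on Λ²V). Then the second Bianchi condition Σ_cyclic{X,Y,Z} R(T(X,Y) ∧ Z) = 0 holds automatically. -/
/-! Pair the cyclic sum, applied to `W`, with `U`. Symmetry of `R` moves `W, U` into the
endomorphism `A = R(W ∧ U) ∈ h`, which is skew, so each term becomes `-T` with `A` acting on one
slot; after cycling the arguments of `T`, the three terms add up to `(A · T)(X, Y, Z)`, which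
vanishes by `h`-invariance of `T`. -/

open scoped RealInnerProductSpace

theorem AlternatingMap.map_cycle_three {R M N : Type*} [Semiring R] [AddCommMonoid M]
    [Module R M] [AddCommGroup N] [Module R N] (g : M [⋀^Fin 3]→ₗ[R] N) (a b c : M) :
    g ![a, b, c] = g ![c, a, b] := by
  have hcycle : ![a, b, c] ∘ (finRotate 3).symm = ![c, a, b] := by
    ext i; fin_cases i <;> rfl
  rw [← hcycle, g.map_perm, show Equiv.Perm.sign (finRotate 3).symm = 1 by decide, one_smul]

theorem inner_apply_dual_eq_neg {E : Type*} [NormedAddCommGroup E] [InnerProductSpace ℝ E]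
    {T : AlternatingMap ℝ E ℝ (Fin 3)} {Tv : E → E → E}
    (hTv : ∀ X Y Z : E, ⟪Tv X Y, Z⟫ = T ![X, Y, Z])
    {R : E →ₗ[ℝ] E →ₗ[ℝ] Module.End ℝ E}
    (hRsymm : ∀ X Y Z W : E, ⟪(R X Y) Z, W⟫ = ⟪(R Z W) X, Y⟫)
    {W U : E} (hskew : ∀ V V' : E, ⟪R W U V, V'⟫ = -⟪V, R W U V'⟫) (X Y Z : E) :
    ⟪R (Tv X Y) Z W, U⟫ = -T ![X, Y, R W U Z] := by
  rw [hRsymm, hskew, hTv]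

attribute [local instance 100] LieRing.ofAssociativeRing

theorem second_bianchi_automatic_general
    {E : Type*} [NormedAddCommGroup E] [InnerProductSpace ℝ E]
    (h : LieSubalgebra ℝ (Module.End ℝ E))
    (hskew : ∀ A ∈ h, ∀ X Y : E, ⟪A X, Y⟫ = -⟪X, A Y⟫)
    (T : AlternatingMap ℝ E ℝ (Fin 3)) (Tv : E → E → E)
    (hTv : ∀ X Y Z : E, ⟪Tv X Y, Z⟫ = T ![X, Y, Z])
    (hTinv : ∀ A ∈ h, ∀ X Y Z : E,
      T ![A X, Y, Z] + T ![X, A Y, Z] + T ![X, Y, A Z] = 0)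
    (R : E →ₗ[ℝ] E →ₗ[ℝ] Module.End ℝ E)
    (hRmem : ∀ X Y : E, R X Y ∈ h)
    (hRsymm : ∀ X Y Z W : E, ⟪(R X Y) Z, W⟫ = ⟪(R Z W) X, Y⟫)
    (X Y Z : E) :
    R (Tv X Y) Z + R (Tv Y Z) X + R (Tv Z X) Y = 0 := by
  refine LinearMap.ext fun W => ext_inner_right ℝ fun U => ?_
  have hA := hRmem W U
  simp only [LinearMap.add_apply, inner_add_left, LinearMap.zero_apply, inner_zero_left,
    inner_apply_dual_eq_neg hTv hRsymm (hskew _ hA)]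
  rw [T.map_cycle_three Y Z, T.map_cycle_three Z X, T.map_cycle_three (R W U Y)]
  linarith [hTinv _ hA X Y Z]

theorem second_bianchi_automatic
    {E : Type*} [NormedAddCommGroup E] [InnerProductSpace ℝ E]
    (h : LieSubalgebra ℝ (Module.End ℝ E))
    (hskew : ∀ A ∈ h, ∀ X Y : E, ⟪A X, Y⟫ = -⟪X, A Y⟫)
    (T : AlternatingMap ℝ E ℝ (Fin 3)) (Tv : E → E → E)
    (hTv : ∀ X Y Z : E, ⟪Tv X Y, Z⟫ = T ![X, Y, Z])
    (hTinv : ∀ A ∈ h, ∀ X Y Z : E,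
      T ![A X, Y, Z] + T ![X, A Y, Z] + T ![X, Y, A Z] = 0)
    (R : E →ₗ[ℝ] E →ₗ[ℝ] Module.End ℝ E)
    (hRalt : ∀ X : E, R X X = 0)
    (hRmem : ∀ X Y : E, R X Y ∈ h)
    (hRsymm : ∀ X Y Z W : E, ⟪(R X Y) Z, W⟫ = ⟪(R Z W) X, Y⟫)
    (X Y Z : E) :
    R (Tv X Y) Z + R (Tv Y Z) X + R (Tv Z X) Y = 0 :=
  second_bianchi_automatic_general h hskew T Tv hTv hTinv R hRmem hRsymm X Y Z
end

section
/- Let T = -(ρ e₁∧e₂∧e₅ + λ e₃∧e₄∧e₅) be a 3-form on ℝ⁵ with ρλ ≠ 0, and let R = a (e₁∧e₂)⊙(e₁∧e₂) + b (e₁∧e₂)⊙(e₃∧e₄) + c (e₃∧e₄)⊙(e₃∧e₄) be a symmetric operator on Λ²ℝ⁵ with image in span(e₁∧e₂, e₃∧e₄). Then the first Bianchi condition Σ_cyclic{X,Y,Z} ⟨R(X∧Y)Z, W⟩ = σ_T(X,Y,Z,W) holds if and only if b = 2λρ. -/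
/- STATEMENT 9: Let T = -(ρ e₁∧e₂∧e₅ + λ e₃∧e₄∧e₅) on ℝ⁵ with ρλ ≠ 0, and let
R = a (e₁∧e₂)⊙(e₁∧e₂) + b (e₁∧e₂)⊙(e₃∧e₄) + c (e₃∧e₄)⊙(e₃∧e₄) be a symmetric operator on
Λ²ℝ⁵ with image in span(e₁∧e₂, e₃∧e₄). Then the first Bianchi condition
Σ_cyclic{X,Y,Z} ⟨R(X∧Y)Z, W⟩ = σ_T(X,Y,Z,W) holds if and only if b = 2λρ.

Here ⊙ is the symmetric product of 2-forms, (α⊙β)(γ) = (⟨α,γ⟩β + ⟨β,γ⟩α)/2 (so that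
α⊙α = α⊗α), with ⟨·,·⟩ the inner product on Λ² making the e_i∧e_j (i<j) orthonormal;
2-forms are identified with skew endomorphisms by ⟨A_ω Z, W⟩ = ω(Z,W).
σ_T(X,Y,Z,W) = Σ_cyclic{X,Y,Z} ⟨T(X,Y), T(Z,W)⟩, T(X,Y) the vector dual to T(X,Y,·).
Indices are 0-based: e₁,...,e₅ are the standard basis vectors of ℝ⁵ = Fin 5 → ℝ. -/

noncomputable section

/-- the 2-form e₁∧e₂ -/
def o1 (X Y : Fin 5 → ℝ) : ℝ := X 0 * Y 1 - X 1 * Y 0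

/-- the 2-form e₃∧e₄ -/
def o2 (X Y : Fin 5 → ℝ) : ℝ := X 2 * Y 3 - X 3 * Y 2

/-- the 3-form e_i∧e_j∧e_k evaluated on (X,Y,Z) -/
def d3 (i j k : Fin 5) (X Y Z : Fin 5 → ℝ) : ℝ :=
  Matrix.det (Matrix.of fun p q => ![X, Y, Z] p (![i, j, k] q))

/-- the torsion form T = -(ρ e₁∧e₂∧e₅ + λ e₃∧e₄∧e₅) -/
def Tq (ρ lam : ℝ) (X Y Z : Fin 5 → ℝ) : ℝ :=
  -(ρ * d3 0 1 4 X Y Z + lam * d3 2 3 4 X Y Z)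

/-- ⟨R(X∧Y)Z, W⟩ for R = a e₁₂⊙e₁₂ + b e₁₂⊙e₃₄ + c e₃₄⊙e₃₄ -/
def Rq (a b c : ℝ) (X Y Z W : Fin 5 → ℝ) : ℝ :=
  a * (o1 X Y * o1 Z W) + (b / 2) * (o1 X Y * o2 Z W + o2 X Y * o1 Z W)
    + c * (o2 X Y * o2 Z W)

/-- σ_T(X,Y,Z,W) = Σ_cyclic{X,Y,Z} ⟨T(X,Y), T(Z,W)⟩ -/
def sigmaq (ρ lam : ℝ) (X Y Z W : Fin 5 → ℝ) : ℝ :=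
  ∑ m : Fin 5,
    (Tq ρ lam X Y (Pi.single m 1) * Tq ρ lam Z W (Pi.single m 1)
      + Tq ρ lam Y Z (Pi.single m 1) * Tq ρ lam X W (Pi.single m 1)
      + Tq ρ lam Z X (Pi.single m 1) * Tq ρ lam Y W (Pi.single m 1))


lemma d3_eq (i j k : Fin 5) (X Y Z : Fin 5 → ℝ) :
    d3 i j k X Y Z = X i * Y j * Z k - X i * Y k * Z j - X j * Y i * Z k
      + X j * Y k * Z i + X k * Y i * Z j - X k * Y j * Z i := by
  simp [d3, Matrix.det_fin_three]

lemma Tq_eq (ρ lam : ℝ) (X Y Z : Fin 5 → ℝ) :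
    Tq ρ lam X Y Z =
      -(ρ * (X 0 * Y 1 * Z 4 - X 0 * Y 4 * Z 1 - X 1 * Y 0 * Z 4
        + X 1 * Y 4 * Z 0 + X 4 * Y 0 * Z 1 - X 4 * Y 1 * Z 0)
      + lam * (X 2 * Y 3 * Z 4 - X 2 * Y 4 * Z 3 - X 3 * Y 2 * Z 4
        + X 3 * Y 4 * Z 2 + X 4 * Y 2 * Z 3 - X 4 * Y 3 * Z 2)) := by
  rw [Tq, d3_eq, d3_eq]

lemma single_apply (m i : Fin 5) : (Pi.single m 1 : Fin 5 → ℝ) i = if i = m then 1 else 0 := by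
  rw [Pi.single_apply]

lemma Tq_single0 (ρ lam : ℝ) (X Y : Fin 5 → ℝ) :
    Tq ρ lam X Y (Pi.single (0 : Fin 5) 1) = -(ρ * (X 1 * Y 4 - X 4 * Y 1)) := by
  rw [Tq_eq]; simp only [single_apply, Fin.reduceEq, reduceIte, if_true]; ring

lemma Tq_single1 (ρ lam : ℝ) (X Y : Fin 5 → ℝ) :
    Tq ρ lam X Y (Pi.single (1 : Fin 5) 1) = -(ρ * (X 4 * Y 0 - X 0 * Y 4)) := by
  rw [Tq_eq]; simp only [single_apply, Fin.reduceEq, reduceIte, if_true]; ring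

lemma Tq_single2 (ρ lam : ℝ) (X Y : Fin 5 → ℝ) :
    Tq ρ lam X Y (Pi.single (2 : Fin 5) 1) = -(lam * (X 3 * Y 4 - X 4 * Y 3)) := by
  rw [Tq_eq]; simp only [single_apply, Fin.reduceEq, reduceIte, if_true]; ring

lemma Tq_single3 (ρ lam : ℝ) (X Y : Fin 5 → ℝ) :
    Tq ρ lam X Y (Pi.single (3 : Fin 5) 1) = -(lam * (X 4 * Y 2 - X 2 * Y 4)) := by
  rw [Tq_eq]; simp only [single_apply, Fin.reduceEq, reduceIte, if_true]; ring

lemma Tq_single4 (ρ lam : ℝ) (X Y : Fin 5 → ℝ) :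
    Tq ρ lam X Y (Pi.single (4 : Fin 5) 1) =
      -(ρ * (X 0 * Y 1 - X 1 * Y 0) + lam * (X 2 * Y 3 - X 3 * Y 2)) := by
  rw [Tq_eq]; simp only [single_apply, Fin.reduceEq, reduceIte, if_true]; ring

lemma sigmaq_eq (ρ lam : ℝ) (X Y Z W : Fin 5 → ℝ) :
    sigmaq ρ lam X Y Z W =
      Rq 0 (2 * lam * ρ) 0 X Y Z W + Rq 0 (2 * lam * ρ) 0 Y Z X W
        + Rq 0 (2 * lam * ρ) 0 Z X Y W := by
  rw [sigmaq, Fin.sum_univ_five]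
  simp only [Tq_single0, Tq_single1, Tq_single2, Tq_single3, Tq_single4, Rq, o1, o2]
  ring

theorem first_bianchi_dim_five (ρ lam a b c : ℝ) (hrl : ρ * lam ≠ 0) :
    (∀ X Y Z W : Fin 5 → ℝ,
        Rq a b c X Y Z W + Rq a b c Y Z X W + Rq a b c Z X Y W
          = sigmaq ρ lam X Y Z W)
      ↔ b = 2 * lam * ρ := by
  constructor
  · intro h
    have h1 := h (Pi.single 0 1) (Pi.single 1 1) (Pi.single 2 1) (Pi.single 3 1)
    rw [sigmaq_eq] at h1
    simp only [Rq, o1, o2, single_apply, Fin.reduceEq, reduceIte, if_true] at h1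
    ring_nf at h1
    linarith
  · intro h X Y Z W
    subst h
    rw [sigmaq_eq]
    simp only [Rq, o1, o2]
    ring


end
end

section
/- Let g = su(2) ⊕ su(2) ⊕ su(2) and let h = {(C,C,C) : C ∈ su(2)} be the diagonal subalgebra. For real numbers a, b, c, d, let m₁ = {(A, aA, bA) : A ∈ su(2)} and m₂ = {(B, cB, dB) : B ∈ su(2)}, and m = m₁ + m₂. Then g = h ⊕ m (direct sum of vector spaces) if and only if Δ := (a-1)(d-1) - (b-1)(c-1) ≠ 0. -/
/- STATEMENT 17: Let g = su(2) ⊕ su(2) ⊕ su(2), h the diagonal {(C,C,C)}, and for reals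
a, b, c, d let m₁ = {(A, aA, bA)}, m₂ = {(B, cB, dB)}, m = m₁ + m₂. Then g = h ⊕ m as
vector spaces if and only if Δ := (a-1)(d-1) - (b-1)(c-1) ≠ 0. -/

open Matrix

attribute [local instance 100] LieRing.ofAssociativeRing

noncomputable section

/-- su(2): traceless skew-Hermitian complex 2×2 matrices, as a real Lie algebra -/
def su2 : LieSubalgebra ℝ (Matrix (Fin 2) (Fin 2) ℂ) where
  carrier := {A | Aᴴ = -A ∧ A.trace = 0}
  add_mem' := by
    rintro x y ⟨h1, h2⟩ ⟨g1, g2⟩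
    constructor
    · simp [Matrix.conjTranspose_add, h1, g1]; abel
    · simp [Matrix.trace_add, h2, g2]
  zero_mem' := by simp
  smul_mem' := by
    rintro r x ⟨h1, h2⟩
    constructor
    · simp [Matrix.conjTranspose_smul, h1]
    · simp [Matrix.trace_smul, h2]
  lie_mem' := by
    rintro x y ⟨h1, h2⟩ ⟨g1, g2⟩
    constructor
    · simp only [Ring.lie_def, Matrix.conjTranspose_sub, Matrix.conjTranspose_mul, h1, g1]
      simp [Matrix.neg_mul, Matrix.mul_neg]
    · simp [Ring.lie_def, Matrix.trace_sub, Matrix.trace_mul_comm x y]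

/-- the linear map A ↦ (A, xA, yA) from su(2) to su(2)³ -/
def tri (x y : ℝ) : su2 →ₗ[ℝ] su2 × su2 × su2 :=
  LinearMap.prod LinearMap.id ((x • LinearMap.id).prod (y • LinearMap.id))

/-- the diagonal subalgebra h = {(C,C,C)} (as a subspace) -/
def hDiag : Submodule ℝ (su2 × su2 × su2) := LinearMap.range (tri 1 1)

/-- m₁ = {(A, aA, bA)} -/
def m₁ (a b : ℝ) : Submodule ℝ (su2 × su2 × su2) := LinearMap.range (tri a b)

/-- m₂ = {(B, cB, dB)} -/
def m₂ (c d : ℝ) : Submodule ℝ (su2 × su2 × su2) := LinearMap.range (tri c d)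


/-! The sum map `Φ (C, A, B) = (C, C, C) + (A, a A, b A) + (B, c B, d B)` is an endomorphism of
`su(2)³` with range `h + m`; the decomposition `g = h ⊕ m` holds exactly when `Φ` is bijective,
which in finite dimension means injective. `Φ` acts by the coefficient matrix
`[[1,1,1],[1,a,c],[1,b,d]]`, whose determinant is `Δ`: for `Δ ≠ 0` eliminating `C` kills the
kernel, and for `Δ = 0` a kernel vector `v` of the matrix gives the kernel element `v ⊗ E` for
any `E ≠ 0`. -/

open Function LinearMap Module

theorem LinearMap.isCompl_range_of_bijective_coprod {R M M₂ M₃ : Type*} [Ring R]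
    [AddCommGroup M] [AddCommGroup M₂] [AddCommGroup M₃] [Module R M] [Module R M₂] [Module R M₃]
    {f : M →ₗ[R] M₃} {g : M₂ →ₗ[R] M₃} (h : Bijective (f.coprod g)) :
    IsCompl (range f) (range g) := by
  set e := LinearEquiv.ofBijective _ h
  have he : (e : M × M₂ →ₗ[R] M₃) = f.coprod g := rfl
  simpa [← range_comp, he] using (Submodule.orderIsoMapComap e).isCompl isCompl_range_inl_inr

theorem LinearMap.isCompl_range_iff_injective_coprod {K V U W : Type*} [Field K]
    [AddCommGroup V] [AddCommGroup U] [AddCommGroup W] [Module K V] [Module K U] [Module K W]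
    [FiniteDimensional K V] [FiniteDimensional K U] [FiniteDimensional K W]
    (hdim : finrank K (V × U) = finrank K W) {f : V →ₗ[K] W} {g : U →ₗ[K] W} :
    IsCompl (range f) (range g) ↔ Injective (f.coprod g) := by
  have hinj := injective_iff_surjective_of_finrank_eq_finrank hdim (f := f.coprod g)
  refine ⟨fun h => hinj.2 ?_, fun h => isCompl_range_of_bijective_coprod ⟨h, hinj.1 h⟩⟩
  rw [← range_eq_top, range_coprod]
  exact h.codisjoint.eq_top

-- A shortcut: without it, instance search fails on products of copies of `su2`.
instance : FiniteDimensional ℝ su2 := inferInstance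

@[simp]
theorem tri_apply (x y : ℝ) (A : su2) : tri x y A = (A, x • A, y • A) := rfl

instance : Nontrivial su2 := by
  refine ⟨⟨⟨!![Complex.I, 0; 0, -Complex.I], ?_, ?_⟩, 0, ?_⟩⟩
  · ext i j; fin_cases i <;> fin_cases j <;> simp [conjTranspose_apply]
  · simp [trace_fin_two]
  · intro h
    simpa using congrArg (fun A : su2 => (A : Matrix (Fin 2) (Fin 2) ℂ) 0 0) h

theorem injective_coprod_tri_iff (a b c d : ℝ) :
    Injective ((tri 1 1).coprod ((tri a b).coprod (tri c d))) ↔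
      (a - 1) * (d - 1) - (b - 1) * (c - 1) ≠ 0 := by
  rw [injective_iff_map_eq_zero]
  constructor
  · intro hinj hΔ
    have hdet : !![1, 1, 1; 1, a, c; 1, b, d].det = 0 := by
      rw [det_fin_three]
      simp only [Fin.isValue, of_apply, cons_val', cons_val_zero, cons_val_fin_one, cons_val_one,
        one_mul, cons_val, mul_one]
      linear_combination hΔ
    obtain ⟨v, hv, hMv⟩ := exists_mulVec_eq_zero_iff.2 hdet
    obtain ⟨E, hE⟩ := exists_ne (0 : su2)
    have h₀ := congrFun hMv 0
    have h₁ := congrFun hMv 1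
    have h₂ := congrFun hMv 2
    simp only [mulVec, dotProduct, Fin.isValue, of_apply, cons_val', cons_val_fin_one, cons_val_zero,
      Fin.sum_univ_three, one_mul, cons_val_one, cons_val, Pi.zero_apply] at h₀ h₁ h₂
    have hker := hinj (v 0 • E, v 1 • E, v 2 • E) (by
      simp only [coprod_apply, tri_apply, Prod.mk_add_mk, Prod.mk_eq_zero, smul_smul, ← add_smul,
        one_mul, ← add_assoc, h₀, h₁, h₂, zero_smul, and_self])
    simp only [Prod.mk_eq_zero, smul_eq_zero, hE, or_false] at hker
    exact hv (by ext i; fin_cases i <;> simp [hker])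
  · rintro hΔ ⟨C, A, B⟩ h
    simp only [coprod_apply, tri_apply, Prod.mk_add_mk, Prod.mk_eq_zero, one_smul] at h
    obtain ⟨h₁, h₂, h₃⟩ := h
    have cancel : ∀ X : su2, ((a - 1) * (d - 1) - (b - 1) * (c - 1)) • X = 0 → X = 0 :=
      fun X hX => (smul_eq_zero.1 hX).resolve_left hΔ
    have hA : A = 0 := cancel A <| by
      linear_combination (norm := module) (d - 1) • (h₂ - h₁) - (c - 1) • (h₃ - h₁)
    have hB : B = 0 := cancel B <| by
      linear_combination (norm := module) (a - 1) • (h₃ - h₁) - (b - 1) • (h₂ - h₁)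
    subst hA hB
    simpa using h₁

theorem reductive_decomposition_iff_delta_ne_zero (a b c d : ℝ) :
    IsCompl hDiag (m₁ a b ⊔ m₂ c d)
      ↔ (a - 1) * (d - 1) - (b - 1) * (c - 1) ≠ 0 := by
  rw [hDiag, m₁, m₂, ← range_coprod, isCompl_range_iff_injective_coprod rfl]
  exact injective_coprod_tri_iff a b c d

end
end
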